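/- Let β : ℤ₊^d → ℝ be a recursively generated multisequence with minimal characteristic polynomials (p₁,…,p_d) (so p_l(shift_l)β = 0 and p_l is the monic annihilating polynomial of minimal degree for the l-th shift). If the moment matrix M(β) is positive semidefinite, then each p_l is squarefree, i.e. p_l has distinct roots (over ℂ). -/

import Mathlib

/-!
The moment matrix `M(β)` is the Gram matrix of the bilinear form `(f, g) ↦ L_β (f g)` on
polynomials, where `L_β` is the Riesz functional `x^i ↦ β i`, and `q(shift_l) β = 0` says that
`q(X_l)` lies in the kernel of this form. If `p_l = r² s`, then `q = r s` satisfies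
`q(X_l)² = p_l(X_l) s(X_l)`, so every `q(X_l) g` is isotropic, hence by Cauchy–Schwarz in the
kernel. Thus `q` annihilates `β`, so `p_l = r q` divides `q` and `r` is a unit. Squarefreeness
passes from `ℝ` to `ℂ` because `ℝ` is perfect.
-/

open MvPolynomial

/-- `q(shift_l) β = 0`. -/
def AnnihilatesShift (d : ℕ) (β : (Fin d →₀ ℕ) → ℝ) (l : Fin d) (q : Polynomial ℝ) : Prop :=
  ∀ i : Fin d →₀ ℕ,
    ∑ k ∈ Finset.range (q.natDegree + 1), q.coeff k * β (i + Finsupp.single l k) = 0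

theorem LinearMap.apply_mul_sq_le {K A : Type*} [Field K] [LinearOrder K] [IsStrictOrderedRing K]
    [CommRing A] [Algebra K A] (L : A →ₗ[K] K) (hL : ∀ f, 0 ≤ L (f * f)) (f g : A) :
    L (f * g) ^ 2 ≤ L (f * f) * L (g * g) := by
  have hquad : ∀ t : K, 0 ≤ L (f * f) * (t * t) + 2 * L (f * g) * t + L (g * g) := by
    intro t
    have h := hL (t • f + g)
    have hexp : (t • f + g) * (t • f + g) = (t * t) • (f * f) + (2 * t) • (f * g) + g * g := by
      simp only [add_mul, mul_add, smul_mul_assoc, mul_smul_comm, mul_comm g f]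
      module
    rw [hexp, map_add, map_add, map_smul, map_smul, smul_eq_mul, smul_eq_mul] at h
    linarith
  have := discrim_le_zero hquad
  rw [discrim] at this
  nlinarith

theorem LinearMap.apply_mul_eq_zero_of_apply_mul_self_eq_zero {K A : Type*} [Field K]
    [LinearOrder K] [IsStrictOrderedRing K] [CommRing A] [Algebra K A] (L : A →ₗ[K] K)
    (hL : ∀ f, 0 ≤ L (f * f)) {f : A} (hf : L (f * f) = 0) (g : A) : L (f * g) = 0 := by
  have := L.apply_mul_sq_le hL f g
  rw [hf, zero_mul] at this
  exact pow_eq_zero_iff two_ne_zero |>.mp (le_antisymm this (sq_nonneg _))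

namespace MvPolynomial

variable {σ R : Type*} [CommSemiring R]

noncomputable def rieszFunctional (β : (σ →₀ ℕ) → R) : MvPolynomial σ R →ₗ[R] R :=
  Finsupp.linearCombination R β ∘ₗ (AddMonoidAlgebra.coeffLinearEquiv R).toLinearMap

theorem rieszFunctional_monomial (β : (σ →₀ ℕ) → R) (i : σ →₀ ℕ) (c : R) :
    rieszFunctional β (monomial i c) = c * β i := by
  rw [← single_eq_monomial]
  exact Finsupp.linearCombination_single R c i

theorem rieszFunctional_mul (β : (σ →₀ ℕ) → R) (f g : MvPolynomial σ R) :
    rieszFunctional β (f * g) =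
      ∑ i ∈ f.support, ∑ j ∈ g.support, coeff i f * coeff j g * β (i + j) := by
  conv_lhs => rw [f.as_sum, g.as_sum, Finset.sum_mul_sum]
  simp only [map_sum, monomial_mul, rieszFunctional_monomial]

end MvPolynomial

section Shift

variable {d : ℕ} (β : (Fin d →₀ ℕ) → ℝ) (l : Fin d)

theorem rieszFunctional_aeval_X_mul_monomial (q : Polynomial ℝ) (i : Fin d →₀ ℕ) :
    rieszFunctional β (Polynomial.aeval (X l) q * monomial i 1) =
      ∑ k ∈ Finset.range (q.natDegree + 1), q.coeff k * β (i + Finsupp.single l k) := by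
  conv_lhs => rw [q.as_sum_range' (q.natDegree + 1) (lt_add_one _)]
  simp only [map_sum, Finset.sum_mul, Polynomial.aeval_monomial, X_pow_eq_monomial,
    algebraMap_eq, C_mul_monomial, monomial_mul, rieszFunctional_monomial, mul_one, add_comm i]

theorem annihilatesShift_iff {q : Polynomial ℝ} :
    AnnihilatesShift d β l q ↔ ∀ g, rieszFunctional β (Polynomial.aeval (X l) q * g) = 0 := by
  refine ⟨fun hq g => ?_, fun h i => ?_⟩
  · conv_lhs => rw [g.as_sum, Finset.mul_sum]
    refine (map_sum _ _ _).trans (Finset.sum_eq_zero fun i _ => ?_)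
    have hmono : monomial i (coeff i g) = coeff i g • monomial i 1 := by
      rw [smul_monomial, smul_eq_mul, mul_one]
    rw [hmono, mul_smul_comm, map_smul, rieszFunctional_aeval_X_mul_monomial, hq i, smul_zero]
  · rw [← rieszFunctional_aeval_X_mul_monomial, h]

variable {β l}

theorem AnnihilatesShift.mul_right {q : Polynomial ℝ} (hq : AnnihilatesShift d β l q)
    (t : Polynomial ℝ) : AnnihilatesShift d β l (q * t) := by
  rw [annihilatesShift_iff] at hq ⊢
  intro g
  rw [map_mul (Polynomial.aeval (X l)), mul_assoc]
  exact hq _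

theorem dvd_of_annihilatesShift {p : Polynomial ℝ}
    (hmin : ∀ q : Polynomial ℝ, q.Monic → AnnihilatesShift d β l q → p ∣ q)
    {q : Polynomial ℝ} (hq0 : q ≠ 0) (hq : AnnihilatesShift d β l q) : p ∣ q := by
  have hlc : IsUnit (Polynomial.C q.leadingCoeff⁻¹) :=
    Polynomial.isUnit_C.mpr (inv_ne_zero (Polynomial.leadingCoeff_ne_zero.mpr hq0)).isUnit
  exact hlc.dvd_mul_right.mp (hmin _ (Polynomial.monic_mul_leadingCoeff_inv hq0) (hq.mul_right _))

theorem squarefree_of_annihilatesShift (hpsd : ∀ f, 0 ≤ rieszFunctional β (f * f))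
    {p : Polynomial ℝ} (hp0 : p ≠ 0) (hann : AnnihilatesShift d β l p)
    (hmin : ∀ q : Polynomial ℝ, q.Monic → AnnihilatesShift d β l q → p ∣ q) :
    Squarefree p := by
  rintro r ⟨s, rfl⟩
  have hq0 : r * s ≠ 0 := right_ne_zero_of_mul (mul_assoc r r s ▸ hp0)
  have hqann : AnnihilatesShift d β l (r * s) := by
    refine (annihilatesShift_iff β l).mpr fun g => ?_
    have hsq : rieszFunctional β
        ((Polynomial.aeval (X l) (r * s) * g) * (Polynomial.aeval (X l) (r * s) * g)) = 0 := by
      rw [show (Polynomial.aeval (X l) (r * s) * g) * (Polynomial.aeval (X l) (r * s) * g) =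
          Polynomial.aeval (X l) (r * r * s) * (Polynomial.aeval (X l) s * g * g) by
        simp only [map_mul]; ring]
      exact (annihilatesShift_iff β l).mp hann _
    simpa using (rieszFunctional β).apply_mul_eq_zero_of_apply_mul_self_eq_zero hpsd hsq 1
  have hdvd : (r * s) * r ∣ (r * s) * 1 := by
    rw [mul_one, mul_right_comm]
    exact dvd_of_annihilatesShift hmin hq0 hqann
  exact isUnit_of_dvd_one ((mul_dvd_mul_iff_left hq0).mp hdvd)

end Shift

/-- If `β` is recursively generated with minimal characteristic polynomials `(p₁,…,p_d)`
and the moment matrix `M(β)` is positive semidefinite, then each `p_l` has distinct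
roots over `ℂ`, i.e. `p_l` is squarefree (over `ℂ`). -/
theorem minimal_char_poly_squarefree (d : ℕ) (β : (Fin d →₀ ℕ) → ℝ)
    (p : Fin d → Polynomial ℝ)
    (hmonic : ∀ l, (p l).Monic)
    (hann : ∀ l, AnnihilatesShift d β l (p l))
    (hmin : ∀ l, ∀ q : Polynomial ℝ, q.Monic → AnnihilatesShift d β l q → p l ∣ q)
    (hpsd : ∀ f : MvPolynomial (Fin d) ℝ,
      0 ≤ ∑ i ∈ f.support, ∑ j ∈ f.support, coeff i f * coeff j f * β (i + j)) :
    ∀ l : Fin d, Squarefree ((p l).map (algebraMap ℝ ℂ)) := by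
  intro l
  have hpsd' : ∀ f, 0 ≤ rieszFunctional β (f * f) := fun f =>
    (rieszFunctional_mul β f f).symm ▸ hpsd f
  have hsf : Squarefree (p l) :=
    squarefree_of_annihilatesShift hpsd' (hmonic l).ne_zero (hann l) (hmin l)
  exact (PerfectField.separable_iff_squarefree.mpr hsf).map.squarefree
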